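/- Property [A] holds for the Frail Fighter: for u = 0 and every fixed n ≥ 1, the function t ↦ K(n,t) is non-increasing on [0,∞). -/

import Mathlib

open Real MeasureTheory Filter Topology

/-- Auxiliary history-based recursion: `Nhist a u n m t` equals `N(m,t)` when `m ≤ n`. -/
noncomputable def Nhist (a : ℕ → ℝ) (u : ℝ) : ℕ → ℕ → ℝ → ℝ
  | 0, _, _ => 0
  | n + 1, m, t =>
      if m ≤ n then Nhist a u n m t
      else (Finset.Icc 1 (n + 1)).sup'
          (Finset.nonempty_Icc.mpr (Nat.succ_le_succ (Nat.zero_le n)))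
          (fun j => a j + (a j * (1 - u) + u) *
            (Real.exp (-t) * ∫ x in (0:ℝ)..t, Nhist a u n (n + 1 - j) x * Real.exp x))

/-- `Nval a u n t` is `N(n,t)`, the optimal expected number of enemy planes shot down,
with `N(0,t) = 0` and `N(n,t) = max_{1 ≤ j ≤ n} N_n(j,t)`. -/
noncomputable def Nval (a : ℕ → ℝ) (u : ℝ) (n : ℕ) (t : ℝ) : ℝ :=
  Nhist a u n n t

/-- `Nstar a u r t` is `N*(r,t) = e^{-t} ∫_0^t N(r,x) e^x dx` (so `N*(0,t) = 0`). -/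
noncomputable def Nstar (a : ℕ → ℝ) (u : ℝ) (r : ℕ) (t : ℝ) : ℝ :=
  Real.exp (-t) * ∫ x in (0:ℝ)..t, Nval a u r x * Real.exp x

/-- `Nalloc a u n j t` is `N_n(j,t) = a(j) + c(j)·N*(n-j,t)` where `c(j) = a(j)(1-u)+u`. -/
noncomputable def Nalloc (a : ℕ → ℝ) (u : ℝ) (n j : ℕ) (t : ℝ) : ℝ :=
  a j + (a j * (1 - u) + u) * Nstar a u (n - j) t

/-- `Kopt a u n t = min { j ∈ {1,…,n} : N_n(j,t) = N(n,t) }`. -/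
noncomputable def Kopt (a : ℕ → ℝ) (u : ℝ) (n : ℕ) (t : ℝ) : ℕ :=
  sInf {j : ℕ | 1 ≤ j ∧ j ≤ n ∧ Nalloc a u n j t = Nval a u n t}

/-!
For `u = 0` put `V n t = 1 + N(n,t)` and `W r t = 1 + N*(r,t)`; then `N_n(j,t) = a(j) * W (n-j) t`
and `W' = V - W`. For `q ≤ p` the derivative of `W p / W q` has the sign of
`V p / W p - V q / W q`, so once `V n t / W n t` is known to be nondecreasing in `n`, a smaller
allocation that is weakly better than a larger one at some time stays so later, which is [A].

The monotonicity in `n` is proved by induction. `W n` is the exponential smoothing of `V n`,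
and smoothing preserves the ratio order as soon as `V (n+1) t / V n t` is nondecreasing in `t`.
That ratio equals `(1 + a(j) W (n+1-j)) / (1 + a(k) W (n-k))` at `t`, and dominates it at times
arbitrarily close after `t`, for suitable optimal `k` at level `n` and `j` at level `n + 1`;
log-concavity of `a` allows `j ≤ k + 1`, and for such a pair the induction hypothesis makes the
derivative of this quotient nonnegative.
-/

open Set

namespace FrailFighter

noncomputable def expSmooth (f : ℝ → ℝ) (t : ℝ) : ℝ :=
  exp (-t) * ∫ x in (0:ℝ)..t, f x * exp x

section ExpSmooth

variable {f g : ℝ → ℝ} {t : ℝ}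

theorem hasDerivAt_expSmooth (hf : Continuous f) (t : ℝ) :
    HasDerivAt (expSmooth f) (f t - expSmooth f t) t := by
  have hc : Continuous fun x => f x * exp x := hf.mul continuous_exp
  have hI : HasDerivAt (fun s => ∫ x in (0:ℝ)..s, f x * exp x) (f t * exp t) t :=
    intervalIntegral.integral_hasDerivAt_right (hc.intervalIntegrable 0 t)
      (hc.stronglyMeasurableAtFilter _ _) hc.continuousAt
  have h : HasDerivAt (expSmooth f)
      (exp (-t) * -1 * (∫ x in (0:ℝ)..t, f x * exp x) + exp (-t) * (f t * exp t)) t :=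
    (hasDerivAt_neg t).exp.mul hI
  convert h using 1
  rw [expSmooth, mul_left_comm, ← exp_add, neg_add_cancel, exp_zero]
  ring

theorem continuous_expSmooth (hf : Continuous f) : Continuous (expSmooth f) :=
  continuous_iff_continuousAt.2 fun t => (hasDerivAt_expSmooth hf t).continuousAt

theorem expSmooth_const (c t : ℝ) : expSmooth (fun _ => c) t = c * (1 - exp (-t)) := by
  simp only [expSmooth]
  rw [intervalIntegral.integral_const_mul, integral_exp, exp_zero, mul_left_comm,
    mul_sub, ← exp_add, neg_add_cancel, exp_zero, mul_one]

theorem expSmooth_mul_sub_mul (hf : Continuous f) (hg : Continuous g) (α β t : ℝ) :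
    expSmooth (fun x => α * f x - β * g x) t = α * expSmooth f t - β * expSmooth g t := by
  simp only [expSmooth, sub_mul, mul_assoc]
  have hfi : IntervalIntegrable (fun x => α * (f x * exp x)) MeasureTheory.volume 0 t :=
    (continuous_const.mul (hf.mul continuous_exp)).intervalIntegrable _ _
  have hgi : IntervalIntegrable (fun x => β * (g x * exp x)) MeasureTheory.volume 0 t :=
    (continuous_const.mul (hg.mul continuous_exp)).intervalIntegrable _ _
  rw [intervalIntegral.integral_sub hfi hgi, intervalIntegral.integral_const_mul,
    intervalIntegral.integral_const_mul]
  ring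

theorem expSmooth_nonneg (ht : 0 ≤ t) (hf : ∀ x ∈ Icc 0 t, 0 ≤ f x) : 0 ≤ expSmooth f t :=
  mul_nonneg (exp_nonneg _) <| intervalIntegral.integral_nonneg ht fun x hx =>
    mul_nonneg (hf x hx) (exp_nonneg x)

theorem expSmooth_le_expSmooth (hf : Continuous f) (hg : Continuous g) (ht : 0 ≤ t)
    (hfg : ∀ x ∈ Icc 0 t, f x ≤ g x) : expSmooth f t ≤ expSmooth g t :=
  mul_le_mul_of_nonneg_left (intervalIntegral.integral_mono_on ht
    ((hf.mul continuous_exp).intervalIntegrable 0 t)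
    ((hg.mul continuous_exp).intervalIntegrable 0 t)
    fun x hx => mul_le_mul_of_nonneg_right (hfg x hx) (exp_nonneg x)) (exp_nonneg _)

theorem expSmooth_le_of_le (hf : Continuous f) (ht : 0 ≤ t) {c : ℝ} (hc : 0 ≤ c)
    (hfc : ∀ x ∈ Icc 0 t, f x ≤ c) : expSmooth f t ≤ c :=
  calc expSmooth f t ≤ expSmooth (fun _ => c) t :=
        expSmooth_le_expSmooth hf continuous_const ht hfc
    _ = c * (1 - exp (-t)) := expSmooth_const c t
    _ ≤ c := mul_le_of_le_one_right hc (by linarith [exp_pos (-t)])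

theorem monotoneOn_expSmooth (hf : Continuous f) (hmono : MonotoneOn f (Ici 0))
    (hnn : ∀ x ∈ Ici 0, 0 ≤ f x) : MonotoneOn (expSmooth f) (Ici 0) := by
  refine monotoneOn_of_deriv_nonneg (convex_Ici 0) (continuous_expSmooth hf).continuousOn
    (fun x _ => (hasDerivAt_expSmooth hf x).differentiableAt.differentiableWithinAt) fun x hx => ?_
  rw [interior_Ici] at hx
  have hx0 : (0:ℝ) ≤ x := le_of_lt hx
  rw [(hasDerivAt_expSmooth hf x).deriv, sub_nonneg]
  exact expSmooth_le_of_le hf hx0 (hnn x hx0) fun y hy => hmono hy.1 hx0 hy.2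

/-- Smooth the pointwise bound `(1 + g t) * f x - (1 + f t) * g x ≤ f t - g t`. -/
theorem one_add_expSmooth_mul_le (hf : Continuous f) (hg : Continuous g) (ht : 0 ≤ t)
    (hgf : g t ≤ f t)
    (hpast : ∀ x ∈ Icc 0 t, (1 + g t) * (1 + f x) ≤ (1 + f t) * (1 + g x)) :
    (1 + g t) * (1 + expSmooth f t) ≤ (1 + f t) * (1 + expSmooth g t) := by
  have key := expSmooth_le_of_le (f := fun x => (1 + g t) * f x - (1 + f t) * g x)
    ((continuous_const.mul hf).sub (continuous_const.mul hg)) ht (sub_nonneg.2 hgf)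
    fun x hx => by linarith [hpast x hx]
  rw [expSmooth_mul_sub_mul hf hg] at key
  linarith

end ExpSmooth

theorem monotoneOn_Ici_of_frequently_touching {F : ℝ → ℝ} {t₀ : ℝ}
    (hF : ContinuousOn F (Ici t₀))
    (htouch : ∀ t ∈ Ici t₀, ∃ φ : ℝ → ℝ, ∃ c, 0 ≤ c ∧ HasDerivAt φ c t ∧ φ t = F t ∧
      ∃ᶠ s in 𝓝[>] t, φ s ≤ F s) :
    MonotoneOn F (Ici t₀) := by
  intro x hx y hy hxy
  have hsub : Icc x y ⊆ Ici t₀ := fun z hz => le_trans hx hz.1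
  have := image_le_of_liminf_slope_right_le_deriv_boundary (f := fun s => -F s) (B := fun _ => -F x)
    (B' := 0) (hF.neg.mono hsub) le_rfl continuousOn_const (fun _ _ => hasDerivWithinAt_const _ _ _)
    (fun z hz r hr => ?_) ⟨hxy, le_rfl⟩
  · simpa using this
  -- the right slopes of `-F` at `z` are frequently below those of `-φ`, which tend to `-c ≤ 0`
  obtain ⟨φ, c, hc, hφ, hφz, hfreq⟩ := htouch z (hsub (Ico_subset_Icc_self hz))
  have hslope : ∀ᶠ s in 𝓝[>] z, c - r < slope φ z s :=
    ((hasDerivAt_iff_tendsto_slope.mp hφ).mono_left (nhdsWithin_mono z fun s hs => ne_of_gt hs))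
      |>.eventually (lt_mem_nhds (by simpa using hr))
  refine (hfreq.and_eventually (hslope.and self_mem_nhdsWithin)).mono ?_
  rintro s ⟨hφs, hsl, hzs : z < s⟩
  rw [slope_def_field] at hsl ⊢
  have hd : 0 < s - z := sub_pos.2 hzs
  rw [lt_div_iff₀ hd] at hsl
  rw [div_lt_iff₀ hd]
  simp only [Pi.zero_apply] at hr
  nlinarith

section Recursion

variable (a : ℕ → ℝ) (u : ℝ)

theorem Nhist_eq_Nval {n m : ℕ} (hm : m ≤ n) (t : ℝ) : Nhist a u n m t = Nval a u m t := by
  induction n with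
  | zero => obtain rfl : m = 0 := Nat.le_zero.1 hm; rfl
  | succ n ih =>
    rcases Nat.lt_or_ge m (n + 1) with h | h
    · rw [Nhist, if_pos (Nat.lt_succ_iff.1 h), ih (Nat.lt_succ_iff.1 h)]
    · obtain rfl : m = n + 1 := le_antisymm hm h; rfl

theorem Nval_zero (t : ℝ) : Nval a u 0 t = 0 := rfl

theorem Nstar_eq_expSmooth (r : ℕ) : Nstar a u r = expSmooth (Nval a u r) := rfl

theorem Nval_succ (n : ℕ) (t : ℝ) :
    Nval a u (n + 1) t = (Finset.Icc 1 (n + 1)).sup' (Finset.nonempty_Icc.2 (by omega))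
      fun j => Nalloc a u (n + 1) j t := by
  change Nhist a u (n + 1) (n + 1) t = _
  rw [Nhist, if_neg (by omega)]
  refine Finset.sup'_congr _ rfl fun j hj => ?_
  have hj : n + 1 - j ≤ n := by simp only [Finset.mem_Icc] at hj; omega
  simp only [Nhist_eq_Nval a u hj]
  rfl

variable {a u}

theorem Nalloc_le_Nval {n j : ℕ} (hj : j ∈ Finset.Icc 1 n) (t : ℝ) :
    Nalloc a u n j t ≤ Nval a u n t := by
  obtain ⟨n, rfl⟩ : ∃ m, n = m + 1 := ⟨n - 1, by simp only [Finset.mem_Icc] at hj; omega⟩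
  rw [Nval_succ]
  exact Finset.le_sup' (fun j => Nalloc a u (n + 1) j t) hj

theorem exists_Nalloc_eq_Nval {n : ℕ} (hn : 1 ≤ n) (t : ℝ) :
    ∃ j ∈ Finset.Icc 1 n, Nalloc a u n j t = Nval a u n t := by
  obtain ⟨n, rfl⟩ : ∃ m, n = m + 1 := ⟨n - 1, by omega⟩
  obtain ⟨j, hj, heq⟩ := Finset.exists_mem_eq_sup' (Finset.nonempty_Icc.2 (by omega))
    fun j => Nalloc a u (n + 1) j t
  exact ⟨j, hj, by rw [Nval_succ, heq]⟩

theorem Nalloc_eq_Nval_of_forall_le {n j : ℕ} (hj : j ∈ Finset.Icc 1 n) {t : ℝ}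
    (hmax : ∀ i ∈ Finset.Icc 1 n, Nalloc a u n i t ≤ Nalloc a u n j t) :
    Nalloc a u n j t = Nval a u n t := by
  obtain ⟨i, hi, heq⟩ := exists_Nalloc_eq_Nval (u := u)
    ((Finset.mem_Icc.1 hj).1.trans (Finset.mem_Icc.1 hj).2) t
  exact (Nalloc_le_Nval hj t).antisymm (heq ▸ hmax i hi)

theorem Kopt_mem {n : ℕ} (hn : 1 ≤ n) (t : ℝ) :
    Kopt a u n t ∈ Finset.Icc 1 n ∧ Nalloc a u n (Kopt a u n t) t = Nval a u n t := by
  obtain ⟨j, hj, heq⟩ := exists_Nalloc_eq_Nval (u := u) hn t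
  obtain ⟨h1, h2, h3⟩ :=
    Nat.sInf_mem (s := {j : ℕ | 1 ≤ j ∧ j ≤ n ∧ Nalloc a u n j t = Nval a u n t})
    ⟨j, (Finset.mem_Icc.1 hj).1, (Finset.mem_Icc.1 hj).2, heq⟩
  exact ⟨Finset.mem_Icc.2 ⟨h1, h2⟩, h3⟩

theorem Kopt_le {n j : ℕ} (hj : j ∈ Finset.Icc 1 n) {t : ℝ}
    (heq : Nalloc a u n j t = Nval a u n t) :
    Kopt a u n t ≤ j :=
  Nat.sInf_le ⟨(Finset.mem_Icc.1 hj).1, (Finset.mem_Icc.1 hj).2, heq⟩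

theorem continuous_Nval (m : ℕ) : Continuous (Nval a u m) := by
  induction m using Nat.strong_induction_on with
  | _ m ih =>
    match m with
    | 0 => exact continuous_const
    | n + 1 =>
      rw [show Nval a u (n + 1) = _ from funext (Nval_succ a u n)]
      refine Continuous.finset_sup'_apply _ fun j hj => ?_
      have hj : n + 1 - j < n + 1 := by simp only [Finset.mem_Icc] at hj; omega
      exact continuous_const.add (continuous_const.mul (continuous_expSmooth (ih _ hj)))

theorem continuous_Nalloc (n j : ℕ) : Continuous (Nalloc a u n j) :=
  continuous_const.add (continuous_const.mul (continuous_expSmooth (continuous_Nval _)))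

end Recursion

variable {a : ℕ → ℝ}

noncomputable def V (a : ℕ → ℝ) (m : ℕ) (t : ℝ) : ℝ := 1 + Nval a 0 m t

noncomputable def W (a : ℕ → ℝ) (r : ℕ) (t : ℝ) : ℝ := 1 + Nstar a 0 r t

theorem Nalloc_zero_eq (n j : ℕ) (t : ℝ) : Nalloc a 0 n j t = a j * W a (n - j) t := by
  simp only [Nalloc, W]
  ring

theorem hasDerivAt_W (r : ℕ) (t : ℝ) : HasDerivAt (W a r) (V a r t - W a r t) t := by
  have h := (hasDerivAt_expSmooth (continuous_Nval (a := a) (u := 0) r) t).const_add 1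
  rwa [show Nval a 0 r t - expSmooth (Nval a 0 r) t = V a r t - W a r t by
    simp only [V, W, Nstar_eq_expSmooth]; ring] at h

theorem continuous_W (r : ℕ) : Continuous (W a r) :=
  continuous_const.add (continuous_expSmooth (continuous_Nval r))

theorem continuous_V (m : ℕ) : Continuous (V a m) :=
  continuous_const.add (continuous_Nval m)

section Nonneg

variable (ha : ∀ j, 0 ≤ a j)
include ha

theorem Nval_nonneg (m : ℕ) {t : ℝ} (ht : 0 ≤ t) : 0 ≤ Nval a 0 m t := by
  induction m using Nat.strong_induction_on generalizing t with
  | _ m ih =>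
    match m with
    | 0 => exact le_rfl
    | n + 1 =>
      refine le_trans ?_ (Nalloc_le_Nval (Finset.mem_Icc.2 ⟨le_rfl, by omega⟩) t)
      rw [Nalloc_zero_eq]
      exact mul_nonneg (ha 1) (add_nonneg zero_le_one
        (expSmooth_nonneg ht fun x hx => ih _ (by omega) hx.1))

theorem one_le_W (r : ℕ) {t : ℝ} (ht : 0 ≤ t) : 1 ≤ W a r t :=
  le_add_of_nonneg_right (expSmooth_nonneg ht fun _ hx => Nval_nonneg ha r hx.1)

theorem one_le_V (m : ℕ) {t : ℝ} (ht : 0 ≤ t) : 1 ≤ V a m t :=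
  le_add_of_nonneg_right (Nval_nonneg ha m ht)

theorem monotoneOn_Nval (m : ℕ) : MonotoneOn (Nval a 0 m) (Ici 0) := by
  induction m using Nat.strong_induction_on with
  | _ m ih =>
    match m with
    | 0 => exact fun _ _ _ _ _ => le_rfl
    | n + 1 =>
      intro s hs t ht hst
      obtain ⟨j, hj, heq⟩ := exists_Nalloc_eq_Nval (a := a) (u := 0) (by omega : 1 ≤ n + 1) s
      have hr : n + 1 - j < n + 1 := by simp only [Finset.mem_Icc] at hj; omega
      have hW : W a (n + 1 - j) s ≤ W a (n + 1 - j) t :=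
        add_le_add_right (monotoneOn_expSmooth (continuous_Nval _) (ih _ hr)
          (fun x hx => Nval_nonneg ha _ hx) hs ht hst) 1
      calc Nval a 0 (n + 1) s = Nalloc a 0 (n + 1) j s := heq.symm
        _ ≤ Nalloc a 0 (n + 1) j t := by
          simp only [Nalloc_zero_eq]; exact mul_le_mul_of_nonneg_left hW (ha j)
        _ ≤ Nval a 0 (n + 1) t := Nalloc_le_Nval hj t

theorem W_le_V (r : ℕ) {t : ℝ} (ht : 0 ≤ t) : W a r t ≤ V a r t :=
  add_le_add_right (expSmooth_le_of_le (continuous_Nval r) ht (Nval_nonneg ha r ht)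
    fun _ hx => monotoneOn_Nval ha r hx.1 ht hx.2) 1

theorem Nval_le_Nval_succ (m : ℕ) {t : ℝ} (ht : 0 ≤ t) :
    Nval a 0 m t ≤ Nval a 0 (m + 1) t := by
  induction m using Nat.strong_induction_on generalizing t with
  | _ m ih =>
    match m with
    | 0 => exact Nval_nonneg ha 1 ht
    | n + 1 =>
      obtain ⟨j, hj, heq⟩ := exists_Nalloc_eq_Nval (a := a) (u := 0) (by omega : 1 ≤ n + 1) t
      simp only [Finset.mem_Icc] at hj
      have hW : W a (n + 1 - j) t ≤ W a (n + 1 + 1 - j) t := by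
        rw [show n + 1 + 1 - j = n + 1 - j + 1 by omega]
        exact add_le_add_right (expSmooth_le_expSmooth (continuous_Nval _) (continuous_Nval _) ht
          fun x hx => ih (n + 1 - j) (by omega) hx.1) 1
      calc Nval a 0 (n + 1) t = Nalloc a 0 (n + 1) j t := heq.symm
        _ ≤ Nalloc a 0 (n + 1 + 1) j t := by
          simp only [Nalloc_zero_eq]; exact mul_le_mul_of_nonneg_left hW (ha j)
        _ ≤ Nval a 0 (n + 1 + 1) t := Nalloc_le_Nval (Finset.mem_Icc.2 ⟨hj.1, by omega⟩) t

theorem monotone_W_index {t : ℝ} (ht : 0 ≤ t) : Monotone fun r => W a r t :=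
  monotone_nat_of_le_succ fun r => add_le_add_right (expSmooth_le_expSmooth (continuous_Nval _)
    (continuous_Nval _) ht fun _ hx => Nval_le_Nval_succ ha r hx.1) 1

theorem exists_hasDerivAt_div_nonneg {j k p q : ℕ} {t : ℝ} (ht : 0 ≤ t)
    (hR : V a q t / W a q t ≤ V a p t / W a p t) (hkj : a k * W a q t ≤ a j * W a p t) :
    ∃ c, 0 ≤ c ∧ HasDerivAt (fun s => (1 + a j * W a p s) / (1 + a k * W a q s)) c t := by
  have hWp := one_le_W ha p ht
  have hWq := one_le_W ha q ht
  have hVq := W_le_V ha q ht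
  have hden : 0 < 1 + a k * W a q t := by nlinarith [ha k]
  refine ⟨_, ?_, (((hasDerivAt_W p t).const_mul (a j)).const_add 1).div
    (((hasDerivAt_W q t).const_mul (a k)).const_add 1) hden.ne'⟩
  refine div_nonneg ?_ (sq_nonneg _)
  rw [div_le_div_iff₀ (by linarith) (by linarith)] at hR
  have hA : 0 ≤ a j * W a p t := (mul_nonneg (ha k) (by linarith)).trans hkj
  refine nonneg_of_mul_nonneg_left ?_
    (mul_pos (by linarith : 0 < W a p t) (by linarith : 0 < W a q t))
  nlinarith [mul_nonneg (mul_nonneg hA hden.le) (sub_nonneg.2 hR),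
    mul_nonneg (mul_nonneg (by linarith : 0 ≤ W a p t) (sub_nonneg.2 hVq)) (sub_nonneg.2 hkj)]

theorem V_mul_W_succ_le (n : ℕ) (hratio : MonotoneOn (fun t => V a (n + 1) t / V a n t) (Ici 0))
    {t : ℝ} (ht : 0 ≤ t) : V a n t * W a (n + 1) t ≤ V a (n + 1) t * W a n t :=
  one_add_expSmooth_mul_le (continuous_Nval _) (continuous_Nval _) ht (Nval_le_Nval_succ ha n ht)
    fun x hx => by
      have h := hratio hx.1 ht hx.2
      rw [div_le_div_iff₀ (by linarith [one_le_V ha n hx.1])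
        (by linarith [one_le_V ha n ht])] at h
      change V a n t * V a (n + 1) x ≤ V a (n + 1) t * V a n x
      linarith

end Nonneg

section Concave

variable (hpos : ∀ j, 1 ≤ j → 0 < a j)
  (hconc : ∀ j, a (j + 2) - a (j + 1) ≤ a (j + 1) - a j)
include hpos hconc

theorem mul_le_mul_succ_of_concave {k l : ℕ} (hk : 1 ≤ k) (hkl : k ≤ l) :
    a (l + 1) * a k ≤ a l * a (k + 1) := by
  induction l, hkl using Nat.le_induction with
  | base => rw [mul_comm]
  | succ l hkl ih =>
    have hl := hpos l (hk.trans hkl)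
    have hsq : a l * a (l + 2) ≤ a (l + 1) ^ 2 := by
      nlinarith [hconc l, sq_nonneg (a l - a (l + 2)), hpos (l + 2) (by omega)]
    refine le_of_mul_le_mul_left ?_ hl
    calc a l * (a (l + 1 + 1) * a k) = (a l * a (l + 2)) * a k := by ring
      _ ≤ a (l + 1) ^ 2 * a k := mul_le_mul_of_nonneg_right hsq (hpos k hk).le
      _ = a (l + 1) * (a (l + 1) * a k) := by ring
      _ ≤ a (l + 1) * (a l * a (k + 1)) := mul_le_mul_of_nonneg_left ih (hpos _ (by omega)).le
      _ = a l * (a (l + 1) * a (k + 1)) := by ring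

variable (ha : ∀ j, 0 ≤ a j)
include ha

theorem Nalloc_succ_le_of_optimal {n k l : ℕ} (hk : 1 ≤ k) (hkl : k < l) (hln : l ≤ n)
    {t : ℝ} (ht : 0 ≤ t) (hopt : Nalloc a 0 n k t = Nval a 0 n t) :
    Nalloc a 0 (n + 1) (l + 1) t ≤ Nalloc a 0 (n + 1) (k + 1) t := by
  have hlk : a l * W a (n - l) t ≤ a k * W a (n - k) t := by
    rw [← Nalloc_zero_eq, ← Nalloc_zero_eq, hopt]
    exact Nalloc_le_Nval (Finset.mem_Icc.2 ⟨by omega, hln⟩) t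
  have hW : 0 ≤ W a (n - l) t := zero_le_one.trans (one_le_W ha _ ht)
  simp only [Nalloc_zero_eq, Nat.add_sub_add_right]
  refine le_of_mul_le_mul_left ?_ (hpos k hk)
  calc a k * (a (l + 1) * W a (n - l) t) = (a (l + 1) * a k) * W a (n - l) t := by ring
    _ ≤ (a l * a (k + 1)) * W a (n - l) t :=
      mul_le_mul_of_nonneg_right (mul_le_mul_succ_of_concave hpos hconc hk hkl.le) hW
    _ = a (k + 1) * (a l * W a (n - l) t) := by ring
    _ ≤ a (k + 1) * (a k * W a (n - k) t) := mul_le_mul_of_nonneg_left hlk (ha _)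
    _ = a k * (a (k + 1) * W a (n - k) t) := by ring

theorem exists_optimal_le_succ {n k : ℕ} (hk : k ∈ Finset.Icc 1 n) {t : ℝ} (ht : 0 ≤ t)
    (hopt : Nalloc a 0 n k t = Nval a 0 n t) :
    ∃ j ∈ Finset.Icc 1 (n + 1), j ≤ k + 1 ∧
      Nalloc a 0 (n + 1) j t = Nval a 0 (n + 1) t := by
  simp only [Finset.mem_Icc] at hk
  obtain ⟨j, hj, hjmax⟩ := (Finset.Icc 1 (k + 1)).exists_max_image
    (fun i => Nalloc a 0 (n + 1) i t) (Finset.nonempty_Icc.2 (by omega))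
  simp only [Finset.mem_Icc] at hj
  have hj' : j ∈ Finset.Icc 1 (n + 1) := Finset.mem_Icc.2 ⟨hj.1, by omega⟩
  refine ⟨j, hj', hj.2, Nalloc_eq_Nval_of_forall_le hj' fun i hi => ?_⟩
  simp only [Finset.mem_Icc] at hi
  rcases le_or_gt i (k + 1) with hik | hik
  · exact hjmax i (Finset.mem_Icc.2 ⟨hi.1, hik⟩)
  · obtain ⟨l, rfl⟩ : ∃ l, i = l + 1 := ⟨i - 1, by omega⟩
    exact (Nalloc_succ_le_of_optimal hpos hconc ha hk.1 (by omega) (by omega) ht hopt).trans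
      (hjmax (k + 1) (Finset.mem_Icc.2 ⟨by omega, le_rfl⟩))

theorem monotoneOn_V_succ_div_V {n : ℕ} (hn : 1 ≤ n)
    (hR : ∀ t, 0 ≤ t → MonotoneOn (fun i => V a i t / W a i t) (Iic n)) :
    MonotoneOn (fun t => V a (n + 1) t / V a n t) (Ici 0) := by
  refine monotoneOn_Ici_of_frequently_touching ((continuous_V _).continuousOn.div
    (continuous_V _).continuousOn fun t ht => (zero_lt_one.trans_le (one_le_V ha n ht)).ne')
    fun t ht => ?_
  have ht : 0 ≤ t := ht
  -- pigeonhole: some `k` is optimal at level `n` at times arbitrarily close to the right of `t`,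
  -- hence, by closedness, also at `t`
  have hall : ∃ᶠ s in 𝓝[>] t, ∃ k ∈ Finset.Icc 1 n, Nalloc a 0 n k s = Nval a 0 n s :=
    Frequently.of_forall fun s => exists_Nalloc_eq_Nval hn s
  obtain ⟨k, hk, hfreq⟩ := (Finset.frequently_exists _).1 hall
  have hclosed : IsClosed {s | Nalloc a 0 n k s = Nval a 0 n s} :=
    isClosed_eq (continuous_Nalloc _ _) (continuous_Nval _)
  have hkt : Nalloc a 0 n k t = Nval a 0 n t := (hclosed.mem_of_frequently_of_tendsto (f := id)
    hfreq (tendsto_id.mono_left nhdsWithin_le_nhds) : t ∈ {s | Nalloc a 0 n k s = Nval a 0 n s})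
  obtain ⟨j, hj, hjk, hjt⟩ := exists_optimal_le_succ hpos hconc ha hk ht hkt
  simp only [Finset.mem_Icc] at hk hj
  have hkj : a k * W a (n - k) t ≤ a j * W a (n + 1 - j) t :=
    calc a k * W a (n - k) t ≤ a k * W a (n + 1 - k) t :=
          mul_le_mul_of_nonneg_left (monotone_W_index ha ht (by omega)) (ha k)
      _ = Nalloc a 0 (n + 1) k t := (Nalloc_zero_eq _ _ _).symm
      _ ≤ Nval a 0 (n + 1) t := Nalloc_le_Nval (Finset.mem_Icc.2 ⟨hk.1, by omega⟩) t
      _ = a j * W a (n + 1 - j) t := by rw [← hjt, Nalloc_zero_eq]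
  obtain ⟨c, hc, hderiv⟩ := exists_hasDerivAt_div_nonneg ha ht
    (hR t ht (by simp only [mem_Iic]; omega) (by simp only [mem_Iic]; omega) (by omega)) hkj
  refine ⟨_, c, hc, hderiv, ?_, (hfreq.and_eventually self_mem_nhdsWithin).mono ?_⟩
  · simp only [V, ← hjt, ← hkt, Nalloc_zero_eq]
  · rintro s ⟨hks, hts : t < s⟩
    rw [show 1 + a k * W a (n - k) s = V a n s by rw [V, ← hks, Nalloc_zero_eq]]
    refine div_le_div_of_nonneg_right (add_le_add_right ?_ 1)
      (zero_le_one.trans (one_le_V ha n (ht.trans hts.le)))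
    rw [← Nalloc_zero_eq]
    exact Nalloc_le_Nval (Finset.mem_Icc.2 hj) s

theorem V_div_W_le_succ (n : ℕ) {t : ℝ} (ht : 0 ≤ t) :
    V a n t / W a n t ≤ V a (n + 1) t / W a (n + 1) t := by
  induction n using Nat.strong_induction_on generalizing t with
  | _ n ih =>
    have hratio : MonotoneOn (fun t => V a (n + 1) t / V a n t) (Ici 0) := by
      rcases Nat.eq_zero_or_pos n with rfl | hn
      · intro x hx y hy hxy
        simpa [V, Nval_zero] using monotoneOn_Nval ha 1 hx hy hxy
      · exact monotoneOn_V_succ_div_V hpos hconc ha hn fun t ht =>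
          monotoneOn_of_le_add_one ordConnected_Iic fun i _ _ hi => ih i hi ht
    rw [div_le_div_iff₀ (by linarith [one_le_W ha n ht]) (by linarith [one_le_W ha (n + 1) ht])]
    exact V_mul_W_succ_le ha n hratio ht

theorem monotoneOn_W_div_W {p q : ℕ} (hqp : q ≤ p) :
    MonotoneOn (fun t => W a p t / W a q t) (Ici 0) := by
  have hWq : ∀ t ∈ Ici (0:ℝ), W a q t ≠ 0 := fun t ht =>
    (zero_lt_one.trans_le (one_le_W ha q ht)).ne'
  refine monotoneOn_of_deriv_nonneg (convex_Ici 0)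
    ((continuous_W p).continuousOn.div (continuous_W q).continuousOn hWq)
    (fun t ht => ((hasDerivAt_W p t).div (hasDerivAt_W q t)
      (hWq t (interior_subset ht))).differentiableAt.differentiableWithinAt) fun t ht => ?_
  have ht : (0:ℝ) ≤ t := interior_subset ht
  have hd : HasDerivAt (fun t => W a p t / W a q t) _ t :=
    (hasDerivAt_W p t).div (hasDerivAt_W q t) (hWq t ht)
  rw [hd.deriv]
  have hR : V a q t / W a q t ≤ V a p t / W a p t :=
    monotone_nat_of_le_succ (fun n => V_div_W_le_succ hpos hconc ha n ht) hqp
  rw [div_le_div_iff₀ (by linarith [one_le_W ha q ht]) (by linarith [one_le_W ha p ht])] at hR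
  exact div_nonneg (by linarith) (sq_nonneg _)

theorem Nalloc_le_Nalloc_of_le {n j k : ℕ} (hjk : j ≤ k) {s t : ℝ} (hs : 0 ≤ s)
    (hst : s ≤ t)
    (h : Nalloc a 0 n k s ≤ Nalloc a 0 n j s) : Nalloc a 0 n k t ≤ Nalloc a 0 n j t := by
  have ht : 0 ≤ t := hs.trans hst
  have hWqs := one_le_W ha (n - k) hs
  have hWqt := one_le_W ha (n - k) ht
  have hr := monotoneOn_W_div_W hpos hconc ha (by omega : n - k ≤ n - j) hs ht hst
  simp only at hr
  rw [div_le_div_iff₀ (by linarith) (by linarith)] at hr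
  simp only [Nalloc_zero_eq] at h ⊢
  refine le_of_mul_le_mul_right ?_ (by linarith : 0 < W a (n - k) s)
  calc a k * W a (n - k) t * W a (n - k) s = a k * W a (n - k) s * W a (n - k) t := by ring
    _ ≤ a j * W a (n - j) s * W a (n - k) t := mul_le_mul_of_nonneg_right h (by linarith)
    _ = a j * (W a (n - j) s * W a (n - k) t) := by ring
    _ ≤ a j * (W a (n - j) t * W a (n - k) s) := mul_le_mul_of_nonneg_left hr (ha j)
    _ = a j * W a (n - j) t * W a (n - k) s := by ring

end Concave

end FrailFighter

open FrailFighter in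
theorem frail_A_general
    (a : ℕ → ℝ) (ha0 : a 0 = 0)
    (hmono : StrictMono a)
    (hconc : ∀ j : ℕ, a (j + 2) - a (j + 1) < a (j + 1) - a j) :
    ∀ n : ℕ, 1 ≤ n → AntitoneOn (fun t => Kopt a 0 n t) (Set.Ici (0:ℝ)) := by
  have hpos : ∀ j, 1 ≤ j → 0 < a j := fun j hj => ha0 ▸ hmono (by omega : 0 < j)
  have ha : ∀ j, 0 ≤ a j := fun j => ha0 ▸ hmono.monotone (Nat.zero_le j)
  intro n hn s hs t ht hst
  obtain ⟨hK, hKs⟩ := Kopt_mem (a := a) (u := 0) hn s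
  obtain ⟨hK', hK't⟩ := Kopt_mem (a := a) (u := 0) hn t
  by_contra! hlt
  refine hlt.not_ge (Kopt_le hK (le_antisymm (Nalloc_le_Nval hK t) ?_))
  rw [← hK't]
  exact Nalloc_le_Nalloc_of_le hpos (fun j => (hconc j).le) ha hlt.le hs hst
    (hKs ▸ Nalloc_le_Nval hK' s)

/-- Theorem 5.1 ([A] for the Frail Fighter): for `u = 0` and every `n ≥ 1`,
`t ↦ K(n,t)` is non-increasing on `[0,∞)`. -/
theorem frail_A
    (a : ℕ → ℝ) (haI : ∀ j, a j ∈ Set.Icc (0:ℝ) 1) (ha0 : a 0 = 0)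
    (hmono : StrictMono a)
    (hconc : ∀ j : ℕ, a (j + 2) - a (j + 1) < a (j + 1) - a j) :
    ∀ n : ℕ, 1 ≤ n → AntitoneOn (fun t => Kopt a 0 n t) (Set.Ici (0:ℝ)) :=
  frail_A_general a ha0 hmono hconc
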